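/- arXiv:1406.7413 — 6 statements merged into one kernel-verified Lean document; each statement's English description precedes it below -/
import Mathlib

section
/- Let CC be a C0-system equipped with an operation f ↦ s_f satisfying the C-system axioms. Then for every object X of CC with l(X) > 0 and every morphism f : Y → ft(X), the canonical square with sides p_{f*X} : f*X → Y, q(f,X) : f*X → X, f : Y → ft(X), p_X : X → ft(X) is a pull-back square in the underlying pre-category of CC. -/
universe u v

/-- A pre-category: sets of objects and morphisms with source, target, identity
and an (everywhere-defined but only meaningful on composable pairs) composition,
written in diagrammatic order: `comp f g` is `f ∘ g` for `f : X → Y`, `g : Y → Z`. -/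
structure PreCat (Ob : Type u) (Mor : Type v) where
  dom : Mor → Ob
  cod : Mor → Ob
  id : Ob → Mor
  comp : Mor → Mor → Mor
  id_dom : ∀ X, dom (id X) = X
  id_cod : ∀ X, cod (id X) = X
  dom_comp : ∀ f g, cod f = dom g → dom (comp f g) = dom f
  cod_comp : ∀ f g, cod f = dom g → cod (comp f g) = cod g
  id_comp : ∀ f, comp (id (dom f)) f = f
  comp_id : ∀ f, comp f (id (cod f)) = f
  comp_assoc : ∀ f g h, cod f = dom g → cod g = dom h →
    comp (comp f g) h = comp f (comp g h)

/-- A C0-system (Definition 2014.07.06.def3). -/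
structure C0 (Ob : Type u) (Mor : Type v) extends PreCat Ob Mor where
  l : Ob → ℕ
  pt : Ob
  ft : Ob → Ob
  p : Ob → Mor
  p_dom : ∀ X, dom (p X) = X
  p_cod : ∀ X, cod (p X) = ft X
  /-- `star X f` is `f*X`, meaningful for `0 < l X` and `cod f = ft X`. -/
  star : Ob → Mor → Ob
  /-- `q X f` is `q(f,X) : f*X → X`, meaningful for `0 < l X` and `cod f = ft X`. -/
  q : Ob → Mor → Mor
  l_pt : l pt = 0
  eq_pt : ∀ X, l X = 0 → X = pt
  l_ft : ∀ X, 0 < l X → l (ft X) = l X - 1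
  ft_pt : ft pt = pt
  pt_final : ∀ Y, ∃! f, dom f = Y ∧ cod f = pt
  l_star : ∀ X f, 0 < l X → cod f = ft X → 0 < l (star X f)
  ft_star : ∀ X f, 0 < l X → cod f = ft X → ft (star X f) = dom f
  q_dom : ∀ X f, 0 < l X → cod f = ft X → dom (q X f) = star X f
  q_cod : ∀ X f, 0 < l X → cod f = ft X → cod (q X f) = X
  square_comm : ∀ X f, 0 < l X → cod f = ft X →
    comp (p (star X f)) f = comp (q X f) (p X)
  star_id : ∀ X, 0 < l X → star X (id (ft X)) = X
  q_id : ∀ X, 0 < l X → q X (id (ft X)) = id X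
  star_comp : ∀ X f g, 0 < l X → cod f = ft X → cod g = dom f →
    star X (comp g f) = star (star X f) g
  q_comp : ∀ X f g, 0 < l X → cod f = ft X → cod g = dom f →
    q X (comp g f) = comp (q (star X f) g) (q X f)

/-- `ft(f) = f ∘ p_X` for `f : Y → X`. -/
def C0.ftMor {Ob : Type u} {Mor : Type v} (C : C0 Ob Mor) (f : Mor) : Mor :=
  C.comp f (C.p (C.cod f))

/-- The axioms of the operation `f ↦ s_f` of a C-system (Definition 2014.07.06.def1),
for `f : Y → X` with `0 < l X`. -/
def C0.IsSOp {Ob : Type u} {Mor : Type v} (C : C0 Ob Mor) (s : Mor → Mor) : Prop :=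
  (∀ f, 0 < C.l (C.cod f) → C.dom (s f) = C.dom f) ∧
  (∀ f, 0 < C.l (C.cod f) → C.cod (s f) = C.star (C.cod f) (C.ftMor f)) ∧
  (∀ f, 0 < C.l (C.cod f) →
    C.comp (s f) (C.p (C.star (C.cod f) (C.ftMor f))) = C.id (C.dom f)) ∧
  (∀ f, 0 < C.l (C.cod f) → C.comp (s f) (C.q (C.cod f) (C.ftMor f)) = f) ∧
  (∀ f U g, 0 < C.l U → C.cod g = C.ft U → 0 < C.l (C.cod f) → C.cod f = C.star U g →
    s f = s (C.comp f (C.q U g)))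

/-- A C-system: a C0-system together with an operation `f ↦ s_f` satisfying the axioms. -/
structure CSys (Ob : Type u) (Mor : Type v) extends C0 Ob Mor where
  sOp : Mor → Mor
  sOp_spec : C0.IsSOp toC0 sOp

def CSys.ftMor {Ob : Type u} {Mor : Type v} (C : CSys Ob Mor) (f : Mor) : Mor :=
  C.comp f (C.p (C.cod f))

/-- `Õb(CC)`: the set of sections `s : ft X → X` of the canonical projections `p_X`,
for `l X > 0`. -/
def CSys.tOb {Ob : Type u} {Mor : Type v} (C : CSys Ob Mor) : Set Mor :=
  {s | 0 < C.l (C.cod s) ∧ C.dom s = C.ft (C.cod s) ∧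
    C.comp s (C.p (C.cod s)) = C.id (C.ft (C.cod s))}

/-- Iterated canonical projection `p_{X,i} : X → ft^i X` (meaningful for `i ≤ l X`). -/
def CSys.pIter {Ob : Type u} {Mor : Type v} (C : CSys Ob Mor) (X : Ob) : ℕ → Mor
  | 0 => C.id X
  | i + 1 => C.comp (CSys.pIter C X i) (C.p (C.ft^[i] X))

/-- Iterated pull-back morphism `q(f,X,i) : f*(X,i) → X` for `f : Y → ft^i X`. -/
def CSys.qIter {Ob : Type u} {Mor : Type v} (C : CSys Ob Mor) (f : Mor) : Ob → ℕ → Mor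
  | _, 0 => f
  | X, i + 1 => C.q X (CSys.qIter C f (C.ft X) i)

/-- Iterated pull-back object `f*(X,i)` for `f : Y → ft^i X`. -/
def CSys.starIter {Ob : Type u} {Mor : Type v} (C : CSys Ob Mor) (f : Mor) : Ob → ℕ → Ob
  | _, 0 => C.dom f
  | X, i + 1 => C.star X (CSys.qIter C f (C.ft X) i)

/-- Pull-back `f*(r,i) : f*(ft X, i-1) → f*(X,i)` of a section `r : ft X → X` along
`q(f, ft X, i-1)` (for `i ≥ 1`); it equals `s` applied to `q(f,ft X,i-1) ∘ r`. -/
def CSys.sectStar {Ob : Type u} {Mor : Type v} (C : CSys Ob Mor)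
    (f : Mor) (X : Ob) (r : Mor) (i : ℕ) : Mor :=
  C.sOp (C.comp (C.qIter f (C.ft X) (i - 1)) r)

/-- The diagonal `δ(X) = s_{Id_X} : X → p_X^*(X)`. -/
def CSys.delta {Ob : Type u} {Mor : Type v} (C : CSys Ob Mor) (X : Ob) : Mor :=
  C.sOp (C.id X)

/-- A C-subsystem: a sub-pre-category closed under the operations defining the
C-system structure. -/
structure Subsystem {Ob : Type u} {Mor : Type v} (C : CSys Ob Mor) where
  obs : Set Ob
  mors : Set Mor
  dom_mem : ∀ f ∈ mors, C.dom f ∈ obs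
  cod_mem : ∀ f ∈ mors, C.cod f ∈ obs
  id_mem : ∀ X ∈ obs, C.id X ∈ mors
  comp_mem : ∀ f ∈ mors, ∀ g ∈ mors, C.cod f = C.dom g → C.comp f g ∈ mors
  pt_mem : C.pt ∈ obs
  ft_mem : ∀ X ∈ obs, C.ft X ∈ obs
  p_mem : ∀ X ∈ obs, C.p X ∈ mors
  star_mem : ∀ X ∈ obs, ∀ f ∈ mors, 0 < C.l X → C.cod f = C.ft X → C.star X f ∈ obs
  q_mem : ∀ X ∈ obs, ∀ f ∈ mors, 0 < C.l X → C.cod f = C.ft X → C.q X f ∈ mors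
  s_mem : ∀ f ∈ mors, 0 < C.l (C.cod f) → C.sOp f ∈ mors

/-- The closure conditions (1)-(6) of Proposition 2009.10.15.prop2 on a pair of subsets
`B ⊆ Ob(CC)`, `B̃ ⊆ Õb(CC)`. -/
def CSys.Closed {Ob : Type u} {Mor : Type v} (C : CSys Ob Mor)
    (B : Set Ob) (Bt : Set Mor) : Prop :=
  C.pt ∈ B ∧
  (∀ X ∈ B, C.ft X ∈ B) ∧
  (∀ s ∈ Bt, C.cod s ∈ B) ∧
  (∀ Y ∈ B, ∀ r ∈ Bt, 0 < C.l Y → ∀ i : ℕ, 1 ≤ i → i ≤ C.l (C.cod r) →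
    C.ft Y = C.ft^[i] (C.cod r) → C.sectStar (C.p Y) (C.cod r) r i ∈ Bt) ∧
  (∀ s ∈ Bt, ∀ r ∈ Bt, ∀ i : ℕ, 1 ≤ i →
    C.cod s = C.ft^[i] (C.cod r) → C.sectStar s (C.cod r) r i ∈ Bt) ∧
  (∀ X ∈ B, 0 < C.l X → C.delta X ∈ Bt)

/-- The inductively defined set of morphisms `Mor(CC')` determined by a pair `(B,B̃)`:
`f : Y → pt` belongs iff `Y ∈ B`; `f : Y → X` with `l X > 0` belongs iff `X ∈ B`,
`ft(f)` belongs and `s_f ∈ B̃`. -/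
inductive MorIn {Ob : Type u} {Mor : Type v} (C : CSys Ob Mor)
    (B : Set Ob) (Bt : Set Mor) : Mor → Prop
  | base (f : Mor) : C.cod f = C.pt → C.dom f ∈ B → MorIn C B Bt f
  | step (f : Mor) : 0 < C.l (C.cod f) → C.cod f ∈ B →
      MorIn C B Bt (C.ftMor f) → C.sOp f ∈ Bt → MorIn C B Bt f

/-- A regular congruence relation on a C-system (Definition 2014.07.04.def1). -/
structure RegCong {Ob : Type u} {Mor : Type v} (C : CSys Ob Mor) where
  rOb : Ob → Ob → Prop
  rMor : Mor → Mor → Prop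
  eqv_ob : Equivalence rOb
  eqv_mor : Equivalence rMor
  dom_compat : ∀ f g, rMor f g → rOb (C.dom f) (C.dom g)
  cod_compat : ∀ f g, rMor f g → rOb (C.cod f) (C.cod g)
  id_compat : ∀ X Y, rOb X Y → rMor (C.id X) (C.id Y)
  ft_compat : ∀ X Y, rOb X Y → rOb (C.ft X) (C.ft Y)
  p_compat : ∀ X Y, rOb X Y → rMor (C.p X) (C.p Y)
  comp_compat : ∀ f f' g g', C.cod f = C.dom g → C.cod f' = C.dom g' →
    rMor f f' → rMor g g' → rMor (C.comp f g) (C.comp f' g')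
  star_compat : ∀ X X' f f', 0 < C.l X → 0 < C.l X' →
    C.cod f = C.ft X → C.cod f' = C.ft X' →
    rOb X X' → rMor f f' → rOb (C.star X f) (C.star X' f')
  q_compat : ∀ X X' f f', 0 < C.l X → 0 < C.l X' →
    C.cod f = C.ft X → C.cod f' = C.ft X' →
    rOb X X' → rMor f f' → rMor (C.q X f) (C.q X' f')
  s_compat : ∀ f f', 0 < C.l (C.cod f) → 0 < C.l (C.cod f') →
    rMor f f' → rMor (C.sOp f) (C.sOp f')
  l_compat : ∀ X Y, rOb X Y → C.l X = C.l Y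
  ob_lift : ∀ X F, 0 < C.l X → rOb (C.ft X) F → ∃ XF, rOb X XF ∧ C.ft XF = F
  mor_lift : ∀ f X' Y', rOb X' (C.dom f) → rOb Y' (C.cod f) →
    ∃ f', C.dom f' = X' ∧ C.cod f' = Y' ∧ rMor f' f

/-- A homomorphism of C-systems, given by a pair of maps on objects and morphisms. -/
structure IsHom {Ob₁ : Type u} {Mor₁ : Type v} {Ob₂ : Type u} {Mor₂ : Type v}
    (C : CSys Ob₁ Mor₁) (D : CSys Ob₂ Mor₂) (F : Ob₁ → Ob₂) (G : Mor₁ → Mor₂) : Prop where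
  dom_map : ∀ f, D.dom (G f) = F (C.dom f)
  cod_map : ∀ f, D.cod (G f) = F (C.cod f)
  id_map : ∀ X, G (C.id X) = D.id (F X)
  comp_map : ∀ f g, C.cod f = C.dom g → G (C.comp f g) = D.comp (G f) (G g)
  l_map : ∀ X, D.l (F X) = C.l X
  pt_map : F C.pt = D.pt
  ft_map : ∀ X, F (C.ft X) = D.ft (F X)
  p_map : ∀ X, G (C.p X) = D.p (F X)
  star_map : ∀ X f, 0 < C.l X → C.cod f = C.ft X → F (C.star X f) = D.star (F X) (G f)
  q_map : ∀ X f, 0 < C.l X → C.cod f = C.ft X → G (C.q X f) = D.q (F X) (G f)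
  s_map : ∀ f, 0 < C.l (C.cod f) → G (C.sOp f) = D.sOp (G f)

/-- A pair of equivalence relations `(∼, ≃)` on `(Ob(CC), Õb(CC))` satisfying the
conditions (1)-(4) of Proposition 2014.07.08.prop1.  The relation `≃` is encoded as a
relation on morphisms supported on `Õb(CC)`. -/
structure TPair {Ob : Type u} {Mor : Type v} (C : CSys Ob Mor) where
  rOb : Ob → Ob → Prop
  rT : Mor → Mor → Prop
  eqv_ob : Equivalence rOb
  rT_supp : ∀ s r, rT s r → s ∈ C.tOb ∧ r ∈ C.tOb
  rT_refl : ∀ s ∈ C.tOb, rT s s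
  rT_symm : ∀ s r, rT s r → rT r s
  rT_trans : ∀ s r t, rT s r → rT r t → rT s t
  ft_compat : ∀ X Y, rOb X Y → rOb (C.ft X) (C.ft Y)
  bd_compat : ∀ s r, rT s r → rOb (C.cod s) (C.cod r)
  T_compat : ∀ Y Y' X X' (i : ℕ), 1 ≤ i → i ≤ C.l X → i ≤ C.l X' →
    0 < C.l Y → 0 < C.l Y' → C.ft Y = C.ft^[i] X → C.ft Y' = C.ft^[i] X' →
    rOb Y Y' → rOb X X' →
    rOb (C.starIter (C.p Y) X i) (C.starIter (C.p Y') X' i)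
  Tt_compat : ∀ Y Y' r r' (i : ℕ), 1 ≤ i → i ≤ C.l (C.cod r) → i ≤ C.l (C.cod r') →
    0 < C.l Y → 0 < C.l Y' → C.ft Y = C.ft^[i] (C.cod r) → C.ft Y' = C.ft^[i] (C.cod r') →
    rOb Y Y' → rT r r' →
    rT (C.sectStar (C.p Y) (C.cod r) r i) (C.sectStar (C.p Y') (C.cod r') r' i)
  S_compat : ∀ s s' X X' (i : ℕ), 1 ≤ i → s ∈ C.tOb → s' ∈ C.tOb →
    C.cod s = C.ft^[i] X → C.cod s' = C.ft^[i] X' → rT s s' → rOb X X' →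
    rOb (C.starIter s X i) (C.starIter s' X' i)
  St_compat : ∀ s s' r r' (i : ℕ), 1 ≤ i →
    C.cod s = C.ft^[i] (C.cod r) → C.cod s' = C.ft^[i] (C.cod r') →
    rT s s' → rT r r' →
    rT (C.sectStar s (C.cod r) r i) (C.sectStar s' (C.cod r') r' i)
  delta_compat : ∀ X X', 0 < C.l X → 0 < C.l X' → rOb X X' →
    rT (C.delta X) (C.delta X')
  l_compat : ∀ X Y, rOb X Y → C.l X = C.l Y
  ob_lift : ∀ X F, 0 < C.l X → rOb (C.ft X) F → ∃ XF, rOb X XF ∧ C.ft XF = F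
  sec_lift : ∀ s X', s ∈ C.tOb → rOb X' (C.cod s) →
    ∃ s', s' ∈ C.tOb ∧ C.cod s' = X' ∧ rT s' s

/-- The relation `∼_Mor` on morphisms with codomain of length `m`, defined by induction
on `m` from a pair `(∼, ≃)`:  for `m = 0`, `(X₁ → pt) ∼ (X₂ → pt)` iff `X₁ ∼ X₂`;
for `m+1`, `f₁ ∼ f₂` iff `ft(f₁) ∼ ft(f₂)` and `s_{f₁} ≃ s_{f₂}`. -/
def CSys.relMorN {Ob : Type u} {Mor : Type v} (C : CSys Ob Mor) (P : TPair C) :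
    ℕ → Mor → Mor → Prop
  | 0, f₁, f₂ => C.cod f₁ = C.pt ∧ C.cod f₂ = C.pt ∧ P.rOb (C.dom f₁) (C.dom f₂)
  | m + 1, f₁, f₂ => C.l (C.cod f₁) = m + 1 ∧ C.l (C.cod f₂) = m + 1 ∧
      CSys.relMorN C P m (C.ftMor f₁) (C.ftMor f₂) ∧ P.rT (C.sOp f₁) (C.sOp f₂)

def CSys.relMor {Ob : Type u} {Mor : Type v} (C : CSys Ob Mor) (P : TPair C)
    (f₁ f₂ : Mor) : Prop :=
  CSys.relMorN C P (C.l (C.cod f₁)) f₁ f₂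

/-- In a C0-system equipped with an operation `f ↦ s_f` satisfying the
C-system axioms, every canonical square is a pull-back square. -/
theorem stmt0 {Ob : Type u} {Mor : Type v} (C : C0 Ob Mor) (sOp : Mor → Mor)
    (hs : C0.IsSOp C sOp) (X : Ob) (hX : 0 < C.l X) (f : Mor) (hf : C.cod f = C.ft X)
    (g₁ g₂ : Mor) (h₁ : C.cod g₁ = C.dom f) (h₂ : C.cod g₂ = X)
    (hdom : C.dom g₁ = C.dom g₂) (hcomm : C.comp g₁ f = C.comp g₂ (C.p X)) :
    ∃! g : Mor, C.dom g = C.dom g₁ ∧ C.cod g = C.star X f ∧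
      C.comp g (C.p (C.star X f)) = g₁ ∧ C.comp g (C.q X f) = g₂ := by
  obtain ⟨hs1, hs2, hs3, hs4, hs5⟩ := hs
  have hZl : 0 < C.l (C.star X f) := C.l_star X f hX hf
  have hZft : C.ft (C.star X f) = C.dom f := C.ft_star X f hX hf
  have hfg₁ : C.cod g₁ = C.ft (C.star X f) := h₁.trans hZft.symm
  have hft2 : C0.ftMor C g₂ = C.comp g₁ f := by
    unfold C0.ftMor; rw [h₂, ← hcomm]
  have hpos2 : 0 < C.l (C.cod g₂) := by rw [h₂]; exact hX
  have hstar : C.star X (C.comp g₁ f) = C.star (C.star X f) g₁ :=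
    C.star_comp X f g₁ hX hf h₁
  have hqc : C.q X (C.comp g₁ f) = C.comp (C.q (C.star X f) g₁) (C.q X f) :=
    C.q_comp X f g₁ hX hf h₁
  have hscod : C.cod (sOp g₂) = C.star (C.star X f) g₁ := by
    rw [hs2 g₂ hpos2, hft2, h₂, hstar]
  have hsdom : C.dom (sOp g₂) = C.dom g₂ := hs1 g₂ hpos2
  have hsp : C.comp (sOp g₂) (C.p (C.star (C.star X f) g₁)) = C.id (C.dom g₂) := by
    have h := hs3 g₂ hpos2
    rwa [hft2, h₂, hstar] at h
  have hsq : C.comp (sOp g₂) (C.q X (C.comp g₁ f)) = g₂ := by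
    have h := hs4 g₂ hpos2
    rwa [hft2, h₂] at h
  have hqd : C.dom (C.q (C.star X f) g₁) = C.star (C.star X f) g₁ :=
    C.q_dom _ g₁ hZl hfg₁
  have hqcod : C.cod (C.q (C.star X f) g₁) = C.star X f := C.q_cod _ g₁ hZl hfg₁
  refine ⟨C.comp (sOp g₂) (C.q (C.star X f) g₁), ⟨?_, ?_, ?_, ?_⟩, ?_⟩
  · rw [C.dom_comp _ _ (hscod.trans hqd.symm), hsdom, hdom]
  · rw [C.cod_comp _ _ (hscod.trans hqd.symm), hqcod]
  · rw [C.comp_assoc _ _ _ (hscod.trans hqd.symm) (hqcod.trans (C.p_dom _).symm),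
      ← C.square_comm _ g₁ hZl hfg₁,
      ← C.comp_assoc _ _ _ (hscod.trans (C.p_dom _).symm)
        (by rw [C.p_cod, C.ft_star _ g₁ hZl hfg₁]),
      hsp, ← hdom, C.id_comp]
  · rw [C.comp_assoc _ _ _ (hscod.trans hqd.symm)
      (hqcod.trans (C.q_dom X f hX hf).symm), ← hqc, hsq]
  · rintro g' ⟨hd', hc', hp', hq'⟩
    have hftg' : C0.ftMor C g' = g₁ := by
      unfold C0.ftMor; rw [hc', hp']
    have hpos' : 0 < C.l (C.cod g') := by rw [hc']; exact hZl
    have h5 := hs5 g' X f hX hf hpos' hc'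
    rw [hq'] at h5
    have h4 := hs4 g' hpos'
    rw [hftg', hc', h5] at h4
    exact h4.symm
end

section
/- Let CC be a C0-system all of whose canonical squares are pull-back squares. Then there exists an operation f ↦ s_f on CC satisfying the C-system axioms, and this operation is unique. -/
universe u v

section StmtOneAux

variable {Ob : Type u} {Mor : Type v} (C : C0 Ob Mor)

theorem aux_dom_ftMor (f : Mor) : C.dom (C.ftMor f) = C.dom f :=
  C.dom_comp f (C.p (C.cod f)) (C.p_dom _).symm

theorem aux_cod_ftMor (f : Mor) : C.cod (C.ftMor f) = C.ft (C.cod f) := by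
  unfold C0.ftMor
  rw [C.cod_comp f (C.p (C.cod f)) (C.p_dom _).symm, C.p_cod]

theorem aux_key
    (hpb : ∀ (X : Ob) (f g₁ g₂ : Mor), 0 < C.l X → C.cod f = C.ft X →
      C.cod g₁ = C.dom f → C.cod g₂ = X → C.dom g₁ = C.dom g₂ →
      C.comp g₁ f = C.comp g₂ (C.p X) →
      ∃! g : Mor, C.dom g = C.dom g₁ ∧ C.cod g = C.star X f ∧
        C.comp g (C.p (C.star X f)) = g₁ ∧ C.comp g (C.q X f) = g₂)
    (f : Mor) (hf : 0 < C.l (C.cod f)) :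
    ∃! g : Mor, C.dom g = C.dom f ∧ C.cod g = C.star (C.cod f) (C.ftMor f) ∧
      C.comp g (C.p (C.star (C.cod f) (C.ftMor f))) = C.id (C.dom f) ∧
      C.comp g (C.q (C.cod f) (C.ftMor f)) = f := by
  have h := hpb (C.cod f) (C.ftMor f) (C.id (C.dom f)) f hf (aux_cod_ftMor C f)
    (by rw [C.id_cod, aux_dom_ftMor])
    rfl
    (C.id_dom _)
    (by
      show C.comp (C.id (C.dom f)) (C.ftMor f) = C.ftMor f
      conv_lhs => rw [← aux_dom_ftMor C f]
      exact C.id_comp _)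
  simpa [C.id_dom] using h

end StmtOneAux

/-- If all canonical squares of a C0-system are pull-back squares then
there is an operation `f ↦ s_f` satisfying the C-system axioms, and it is unique. -/
theorem stmt1 {Ob : Type u} {Mor : Type v} (C : C0 Ob Mor)
    (hpb : ∀ (X : Ob) (f g₁ g₂ : Mor), 0 < C.l X → C.cod f = C.ft X →
      C.cod g₁ = C.dom f → C.cod g₂ = X → C.dom g₁ = C.dom g₂ →
      C.comp g₁ f = C.comp g₂ (C.p X) →
      ∃! g : Mor, C.dom g = C.dom g₁ ∧ C.cod g = C.star X f ∧
        C.comp g (C.p (C.star X f)) = g₁ ∧ C.comp g (C.q X f) = g₂) :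
    ∃ s : Mor → Mor, C0.IsSOp C s ∧
      ∀ s' : Mor → Mor, C0.IsSOp C s' → ∀ f, 0 < C.l (C.cod f) → s' f = s f := by
    classical
  let s : Mor → Mor := fun f =>
    if hf : 0 < C.l (C.cod f) then (aux_key C hpb f hf).exists.choose else f
  have s_spec : ∀ f (hf : 0 < C.l (C.cod f)),
      C.dom (s f) = C.dom f ∧ C.cod (s f) = C.star (C.cod f) (C.ftMor f) ∧
      C.comp (s f) (C.p (C.star (C.cod f) (C.ftMor f))) = C.id (C.dom f) ∧
      C.comp (s f) (C.q (C.cod f) (C.ftMor f)) = f := by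
    intro f hf
    simp only [s, dif_pos hf]
    exact (aux_key C hpb f hf).exists.choose_spec
  have s_unique : ∀ f (hf : 0 < C.l (C.cod f)) (g : Mor),
      (C.dom g = C.dom f ∧ C.cod g = C.star (C.cod f) (C.ftMor f) ∧
       C.comp g (C.p (C.star (C.cod f) (C.ftMor f))) = C.id (C.dom f) ∧
       C.comp g (C.q (C.cod f) (C.ftMor f)) = f) → g = s f := by
    intro f hf g hg
    exact (aux_key C hpb f hf).unique hg (s_spec f hf)
  refine ⟨s, ⟨fun f hf => (s_spec f hf).1, fun f hf => (s_spec f hf).2.1,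
      fun f hf => (s_spec f hf).2.2.1, fun f hf => (s_spec f hf).2.2.2, ?_⟩,
    fun s' hs' f hf => s_unique f hf (s' f)
      ⟨hs'.1 f hf, hs'.2.1 f hf, hs'.2.2.1 f hf, hs'.2.2.2.1 f hf⟩⟩
  -- axiom 5
  intro f U g hU hg hf hcod
  -- f' = f ∘ q(g,U)
  set f' : Mor := C.comp f (C.q U g) with hf'
  have hdomq : C.dom (C.q U g) = C.star U g := C.q_dom U g hU hg
  have hcodq : C.cod (C.q U g) = U := C.q_cod U g hU hg
  have hcomp : C.cod f = C.dom (C.q U g) := by rw [hdomq, hcod]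
  have hcodf' : C.cod f' = U := by rw [hf', C.cod_comp f _ hcomp, hcodq]
  have hdomf' : C.dom f' = C.dom f := C.dom_comp f _ hcomp
  have hf'pos : 0 < C.l (C.cod f') := by rw [hcodf']; exact hU
  set h : Mor := C.ftMor f with hh
  have hcodh : C.cod h = C.dom g := by
    rw [hh, aux_cod_ftMor, hcod, C.ft_star U g hU hg]
  -- ftMor f' = comp h g
  have hstareq : C.cod g = C.ft U := hg
  have key1 : C.ftMor f' = C.comp h g := by
    show C.comp f' (C.p (C.cod f')) = _
    rw [hcodf', hf', C.comp_assoc f (C.q U g) (C.p U) hcomp (by rw [hcodq, C.p_dom]),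
      ← C.square_comm U g hU hg,
      ← C.comp_assoc f (C.p (C.star U g)) g (by rw [hcod, C.p_dom]) (by rw [C.p_cod, C.ft_star U g hU hg])]
    rw [hh]
    show _ = C.comp (C.comp f (C.p (C.cod f))) g
    rw [hcod]
  have key2 : C.star (C.cod f') (C.ftMor f') = C.star (C.cod f) h := by
    rw [hcodf', key1, C.star_comp U g h hU hg hcodh, hcod]
  have key3 : C.q (C.cod f') (C.ftMor f') = C.comp (C.q (C.star U g) h) (C.q U g) := by
    rw [hcodf', key1, C.q_comp U g h hU hg hcodh]
  obtain ⟨hd, hc, hp, hq⟩ := s_spec f hf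
  refine s_unique f' hf'pos (s f) ⟨by rw [hd, hdomf'], by rw [hc, key2], ?_, ?_⟩
  · rw [key2, hp, hdomf']
  · rw [key3, ← C.comp_assoc (s f) (C.q (C.star U g) h) (C.q U g)
      (by rw [hc, hcod, C.q_dom (C.star U g) h (by rw [← hcod]; exact hf) (by rw [aux_cod_ftMor C f, hcod])])
      (by rw [C.q_cod (C.star U g) h (by rw [← hcod]; exact hf) (by rw [aux_cod_ftMor C f, hcod]), hdomq])]
    have : C.comp (s f) (C.q (C.star U g) h) = f := by rw [← hcod]; exact hq
    rw [this]
end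

section
/- Let CC be a C0-system equipped with an operation f ↦ s_f satisfying the C-system axioms, let X be an object with l(X) > 0 and f : Y → ft(X). If g, g' : Z → f*X satisfy g ∘ p_{f*X} = g' ∘ p_{f*X} and g ∘ q(f,X) = g' ∘ q(f,X), then g = g'. -/
universe u v

/-- the injectivity part of the pull-back property of canonical squares. -/
theorem stmt2 {Ob : Type u} {Mor : Type v} (C : C0 Ob Mor) (sOp : Mor → Mor)
    (hs : C0.IsSOp C sOp) (X : Ob) (hX : 0 < C.l X) (f : Mor) (hf : C.cod f = C.ft X)
    (g g' : Mor) (hdom : C.dom g = C.dom g')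
    (hgc : C.cod g = C.star X f) (hg'c : C.cod g' = C.star X f)
    (e₁ : C.comp g (C.p (C.star X f)) = C.comp g' (C.p (C.star X f)))
    (e₂ : C.comp g (C.q X f) = C.comp g' (C.q X f)) :
    g = g' := by
  obtain ⟨h1, h2, h3, h4, h5⟩ := hs
  have hl : 0 < C.l (C.star X f) := C.l_star X f hX hf
  have hlg : 0 < C.l (C.cod g) := hgc ▸ hl
  have hlg' : 0 < C.l (C.cod g') := hg'c ▸ hl
  have hsgg' : sOp g = sOp g' := by
    rw [h5 g X f hX hf hlg hgc, h5 g' X f hX hf hlg' hg'c, e₂]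
  have hft : C.ftMor g = C.ftMor g' := by
    unfold C0.ftMor; rw [hgc, hg'c]; exact e₁
  calc g = C.comp (sOp g) (C.q (C.cod g) (C.ftMor g)) := (h4 g hlg).symm
    _ = C.comp (sOp g') (C.q (C.cod g') (C.ftMor g')) := by rw [hsgg', hft, hgc, hg'c]
    _ = g' := h4 g' hlg'
end

section
/- Let CC be a C0-system equipped with an operation f ↦ s_f satisfying the C-system axioms, let X be an object with l(X) > 0 and f : Y → ft(X). Given g₁ : Z → Y and g₂ : Z → X with g₁ ∘ f = g₂ ∘ p_X, the morphism g = s_{g₂} ∘ q(g₁, f*X) satisfies g ∘ p_{f*X} = g₁ and g ∘ q(f,X) = g₂. -/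
universe u v

/-- the existence part of the pull-back property of canonical squares:
`g = s_{g₂} ∘ q(g₁, f*X)` satisfies `g ∘ p_{f*X} = g₁` and `g ∘ q(f,X) = g₂`. -/
theorem stmt3 {Ob : Type u} {Mor : Type v} (C : C0 Ob Mor) (sOp : Mor → Mor)
    (hs : C0.IsSOp C sOp) (X : Ob) (hX : 0 < C.l X) (f : Mor) (hf : C.cod f = C.ft X)
    (g₁ g₂ : Mor) (h₁ : C.cod g₁ = C.dom f) (h₂ : C.cod g₂ = X)
    (hdom : C.dom g₁ = C.dom g₂) (hcomm : C.comp g₁ f = C.comp g₂ (C.p X)) :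
    C.comp (C.comp (sOp g₂) (C.q (C.star X f) g₁)) (C.p (C.star X f)) = g₁ ∧
    C.comp (C.comp (sOp g₂) (C.q (C.star X f) g₁)) (C.q X f) = g₂ := by
  obtain ⟨hsd, hsc, hsp, hsq, _⟩ := hs
  have hX2 : 0 < C.l (C.cod g₂) := by rw [h₂]; exact hX
  have hft : C.ftMor g₂ = C.comp g₁ f := by
    unfold C0.ftMor; rw [h₂, ← hcomm]
  have lfX : 0 < C.l (C.star X f) := C.l_star X f hX hf
  have ftfX : C.ft (C.star X f) = C.dom f := C.ft_star X f hX hf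
  have h₁' : C.cod g₁ = C.ft (C.star X f) := by rw [ftfX]; exact h₁
  have hstar : C.star X (C.comp g₁ f) = C.star (C.star X f) g₁ :=
    C.star_comp X f g₁ hX hf h₁
  -- properties of s := sOp g₂
  have hscod : C.cod (sOp g₂) = C.star (C.star X f) g₁ := by
    rw [hsc g₂ hX2, h₂, hft, hstar]
  have hsdom : C.dom (sOp g₂) = C.dom g₂ := hsd g₂ hX2
  have hsp' : C.comp (sOp g₂) (C.p (C.star (C.star X f) g₁)) = C.id (C.dom g₂) := by
    have := hsp g₂ hX2
    rwa [h₂, hft, hstar] at this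
  have hsq' : C.comp (sOp g₂) (C.q X (C.comp g₁ f)) = g₂ := by
    have := hsq g₂ hX2
    rwa [h₂, hft] at this
  have hqd : C.dom (C.q (C.star X f) g₁) = C.star (C.star X f) g₁ :=
    C.q_dom (C.star X f) g₁ lfX h₁'
  have hqc : C.cod (C.q (C.star X f) g₁) = C.star X f :=
    C.q_cod (C.star X f) g₁ lfX h₁'
  have hcs : C.cod (sOp g₂) = C.dom (C.q (C.star X f) g₁) := by rw [hscod, hqd]
  constructor
  · -- first equation
    rw [C.comp_assoc _ _ _ hcs (by rw [hqc, C.p_dom])]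
    have hsqcomm : C.comp (C.q (C.star X f) g₁) (C.p (C.star X f)) =
        C.comp (C.p (C.star (C.star X f) g₁)) g₁ :=
      (C.square_comm (C.star X f) g₁ lfX h₁').symm
    rw [hsqcomm, ← C.comp_assoc _ _ _ (by rw [hscod, C.p_dom])
        (by rw [C.p_cod, C.ft_star (C.star X f) g₁ lfX h₁']),
      hsp', ← hdom, C.id_comp]
  · -- second equation
    rw [C.comp_assoc _ _ _ hcs (by rw [hqc, C.q_dom X f hX hf]),
      ← C.q_comp X f g₁ hX hf h₁, hsq']
end

section
/- Let CC be a C-system and let CC', CC'' be two C-subsystems of CC such that Ob(CC') = Ob(CC'') as subsets of Ob(CC) and Õb(CC') = Õb(CC'') as subsets of Õb(CC). Then CC' = CC'' (in particular Mor(CC') = Mor(CC'')). -/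
universe u v

lemma l_ft_iter {Ob : Type u} {Mor : Type v} (C : CSys Ob Mor) (X : Ob) (i : ℕ) :
    C.l (C.ft^[i] X) = C.l X - i := by
  induction i with
  | zero => simp
  | succ n ih =>
    rw [Function.iterate_succ_apply']
    rcases Nat.eq_zero_or_pos (C.l (C.ft^[n] X)) with h0 | hp
    · have := C.eq_pt _ h0
      rw [this, C.ft_pt, C.l_pt]
      omega
    · rw [C.l_ft _ hp, ih]
      omega

lemma pIter_facts {Ob : Type u} {Mor : Type v} (C : CSys Ob Mor) (S : Subsystem C)
    (Y : Ob) (hY : Y ∈ S.obs) (i : ℕ) :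
    C.ft^[i] Y ∈ S.obs ∧ C.dom (C.pIter Y i) = Y ∧
      C.cod (C.pIter Y i) = C.ft^[i] Y ∧ C.pIter Y i ∈ S.mors := by
  induction i with
  | zero =>
    refine ⟨hY, ?_, ?_, S.id_mem Y hY⟩ <;> simp [CSys.pIter, C.id_dom, C.id_cod]
  | succ n ih =>
    obtain ⟨h1, h2, h3, h4⟩ := ih
    have hcd : C.cod (C.pIter Y n) = C.dom (C.p (C.ft^[n] Y)) := by rw [h3, C.p_dom]
    refine ⟨?_, ?_, ?_, ?_⟩
    · rw [Function.iterate_succ_apply']; exact S.ft_mem _ h1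
    · show C.dom (C.comp (C.pIter Y n) (C.p (C.ft^[n] Y))) = Y
      rw [C.dom_comp _ _ hcd, h2]
    · show C.cod (C.comp (C.pIter Y n) (C.p (C.ft^[n] Y))) = C.ft^[n+1] Y
      rw [C.cod_comp _ _ hcd, C.p_cod, Function.iterate_succ_apply']
    · exact S.comp_mem _ h4 _ (S.p_mem _ h1) (by rw [h3, C.p_dom])

lemma mors_subset {Ob : Type u} {Mor : Type v} (C : CSys Ob Mor) (S₁ S₂ : Subsystem C)
    (hOb : S₁.obs = S₂.obs) (hT : S₁.mors ∩ C.tOb ⊆ S₂.mors) :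
    S₁.mors ⊆ S₂.mors := by
  obtain ⟨hs1, hs2, hs3, hs4, hs5⟩ := C.sOp_spec
  have key : ∀ n : ℕ, ∀ f, C.l (C.cod f) = n → f ∈ S₁.mors → f ∈ S₂.mors := by
    intro n
    induction n using Nat.strong_induction_on with
    | _ n ih =>
      intro f hn hf
      rcases Nat.eq_zero_or_pos n with rfl | hpos
      · -- cod f = pt
        have hpt : C.cod f = C.pt := C.eq_pt _ hn
        have hY : C.dom f ∈ S₂.obs := hOb ▸ S₁.dom_mem f hf
        set Y := C.dom f
        obtain ⟨h1, h2, h3, h4⟩ := pIter_facts C S₂ Y hY (C.l Y)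
        have hlen : C.l (C.ft^[C.l Y] Y) = 0 := by rw [l_ft_iter]; omega
        have hpt2 : C.ft^[C.l Y] Y = C.pt := C.eq_pt _ hlen
        obtain ⟨g, -, hgu⟩ := C.pt_final Y
        have e1 : f = g := hgu f ⟨rfl, hpt⟩
        have e2 : C.pIter Y (C.l Y) = g := hgu _ ⟨h2, by rw [h3, hpt2]⟩
        rw [e1, ← e2]; exact h4
      · have hc : 0 < C.l (C.cod f) := hn ▸ hpos
        have hcodf : C.cod f ∈ S₁.obs := S₁.cod_mem f hf
        have hpm : C.p (C.cod f) ∈ S₁.mors := S₁.p_mem _ hcodf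
        have hcomp : C.cod f = C.dom (C.p (C.cod f)) := (C.p_dom _).symm
        have hftm : C.ftMor f ∈ S₁.mors := S₁.comp_mem _ hf _ hpm hcomp
        have hcodft : C.cod (C.ftMor f) = C.ft (C.cod f) := by
          show C.cod (C.comp f (C.p (C.cod f))) = _
          rw [C.cod_comp _ _ hcomp, C.p_cod]
        have hdomft : C.dom (C.ftMor f) = C.dom f := by
          show C.dom (C.comp f (C.p (C.cod f))) = _
          exact C.dom_comp _ _ hcomp
        have hlft : C.l (C.cod (C.ftMor f)) < n := by
          rw [hcodft, C.l_ft _ hc]; omega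
        have hftm2 : C.ftMor f ∈ S₂.mors := ih _ hlft _ rfl hftm
        -- s_f ∈ tOb
        have hcs : C.cod (C.sOp f) = C.star (C.cod f) (C.ftMor f) := hs2 f hc
        have hstarpos : 0 < C.l (C.star (C.cod f) (C.ftMor f)) := C.l_star _ _ hc hcodft
        have hsf : C.sOp f ∈ C.tOb := by
          refine ⟨by rw [hcs]; exact hstarpos, ?_, ?_⟩
          · rw [hcs, C.ft_star _ _ hc hcodft, hdomft]; exact hs1 f hc
          · have := hs3 f hc
            rw [hcs, C.ft_star _ _ hc hcodft, hdomft]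
            exact this
        have hsf1 : C.sOp f ∈ S₁.mors := S₁.s_mem f hf hc
        have hsf2 : C.sOp f ∈ S₂.mors := hT ⟨hsf1, hsf⟩
        -- q ∈ S₂
        have hq2 : C.q (C.cod f) (C.ftMor f) ∈ S₂.mors :=
          S₂.q_mem _ (hOb ▸ hcodf) _ hftm2 hc hcodft
        have hfq : f = C.comp (C.sOp f) (C.q (C.cod f) (C.ftMor f)) := (hs4 f hc).symm
        rw [hfq]
        exact S₂.comp_mem _ hsf2 _ hq2 (by rw [hcs, C.q_dom _ _ hc hcodft])
  exact fun f hf => key _ f rfl hf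

/-- Lemma 2009.10.15.l1: two C-subsystems with the same objects and the
same elements of `Õb` coincide. -/
theorem stmt4 {Ob : Type u} {Mor : Type v} (C : CSys Ob Mor) (S₁ S₂ : Subsystem C)
    (hOb : S₁.obs = S₂.obs) (hT : S₁.mors ∩ C.tOb = S₂.mors ∩ C.tOb) :
    S₁ = S₂ := by
  have hMor : S₁.mors = S₂.mors := by
    apply Set.Subset.antisymm
    · exact mors_subset C S₁ S₂ hOb (by rw [hT]; exact Set.inter_subset_left)
    · exact mors_subset C S₂ S₁ hOb.symm (by rw [← hT]; exact Set.inter_subset_left)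
  cases S₁; cases S₂
  simp_all
end

section
/- Let CC be a C-system and let B ⊆ Ob(CC), B̃ ⊆ Õb(CC) satisfy: (1) pt ∈ B; (2) if X ∈ B then ft(X) ∈ B; (3) if s ∈ B̃ then ∂(s) ∈ B; (4) if Y ∈ B and r ∈ B̃ with T̃(Y,r) defined, then T̃(Y,r) ∈ B̃; (5) if s ∈ B̃ and r ∈ B̃ with S̃(s,r) defined, then S̃(s,r) ∈ B̃; (6) if X ∈ B with l(X) > 0 then δ(X) ∈ B̃. Then there exists a (unique) C-subsystem CC' of CC with Ob(CC') = B and Õb(CC') = B̃. -/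
universe u v

namespace Stmt7Proof

variable {Ob : Type u} {Mor : Type v} (C : CSys Ob Mor)

lemma sOp_dom (f : Mor) (h : 0 < C.l (C.cod f)) : C.dom (C.sOp f) = C.dom f :=
  C.sOp_spec.1 f h

lemma sOp_cod (f : Mor) (h : 0 < C.l (C.cod f)) :
    C.cod (C.sOp f) = C.star (C.cod f) (C.ftMor f) :=
  C.sOp_spec.2.1 f h

lemma sOp_p (f : Mor) (h : 0 < C.l (C.cod f)) :
    C.comp (C.sOp f) (C.p (C.star (C.cod f) (C.ftMor f))) = C.id (C.dom f) :=
  C.sOp_spec.2.2.1 f h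

lemma sOp_q (f : Mor) (h : 0 < C.l (C.cod f)) :
    C.comp (C.sOp f) (C.q (C.cod f) (C.ftMor f)) = f :=
  C.sOp_spec.2.2.2.1 f h

lemma sOp_congr (f : Mor) (U : Ob) (g : Mor) (hU : 0 < C.l U) (hg : C.cod g = C.ft U)
    (hf : 0 < C.l (C.cod f)) (hc : C.cod f = C.star U g) :
    C.sOp f = C.sOp (C.comp f (C.q U g)) :=
  C.sOp_spec.2.2.2.2 f U g hU hg hf hc

lemma ftMor_cod (f : Mor) : C.cod (C.ftMor f) = C.ft (C.cod f) := by
  unfold CSys.ftMor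
  rw [C.cod_comp _ _ (C.p_dom _).symm, C.p_cod]

lemma ftMor_dom (f : Mor) : C.dom (C.ftMor f) = C.dom f := by
  unfold CSys.ftMor
  rw [C.dom_comp _ _ (C.p_dom _).symm]

lemma l_pos_of_iter {X : Ob} {k : ℕ} (h : 0 < C.l (C.ft^[k] X)) : 0 < C.l X := by
  by_contra hx
  have hX : X = C.pt := C.eq_pt X (Nat.eq_zero_of_not_pos hx)
  have hfix : ∀ n, C.ft^[n] C.pt = C.pt := by
    intro n
    induction n with
    | zero => rfl
    | succ n ih => rw [Function.iterate_succ_apply', ih, C.ft_pt]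
  rw [hX, hfix, C.l_pt] at h
  exact absurd h (lt_irrefl 0)

lemma l_ft_iter (X : Ob) : ∀ j, j ≤ C.l X → C.l (C.ft^[j] X) = C.l X - j := by
  intro j
  induction j with
  | zero => intro _; rfl
  | succ j ih =>
    intro hj
    have hj' : j < C.l X := hj
    have h1 : C.l (C.ft^[j] X) = C.l X - j := ih (le_of_lt hj')
    have hpos : 0 < C.l (C.ft^[j] X) := by omega
    rw [Function.iterate_succ_apply', C.l_ft _ hpos, h1]
    omega

lemma to_pt_unique (f g : Mor) (hf : C.cod f = C.pt) (hg : C.cod g = C.pt)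
    (h : C.dom f = C.dom g) : f = g := by
  obtain ⟨u, _, hu⟩ := C.pt_final (C.dom f)
  rw [hu f ⟨rfl, hf⟩, hu g ⟨h.symm, hg⟩]

lemma tOb_def (r : Mor) : r ∈ C.tOb ↔ 0 < C.l (C.cod r) ∧ C.dom r = C.ft (C.cod r) ∧
    C.comp r (C.p (C.cod r)) = C.id (C.ft (C.cod r)) := Iff.rfl

lemma sOp_tOb (f : Mor) (h : 0 < C.l (C.cod f)) : C.sOp f ∈ C.tOb := by
  have hcod : C.cod (C.sOp f) = C.star (C.cod f) (C.ftMor f) := sOp_cod C f h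
  have hstar : 0 < C.l (C.star (C.cod f) (C.ftMor f)) :=
    C.l_star _ _ h (ftMor_cod C f)
  have hft : C.ft (C.star (C.cod f) (C.ftMor f)) = C.dom f := by
    rw [C.ft_star _ _ h (ftMor_cod C f), ftMor_dom]
  refine ⟨?_, ?_, ?_⟩
  · rw [hcod]; exact hstar
  · rw [hcod, hft, sOp_dom C f h]
  · rw [hcod, hft]; exact sOp_p C f h

lemma sOp_section (r : Mor) (hr : r ∈ C.tOb) : C.sOp r = r := by
  obtain ⟨hl, hd, hs⟩ := hr
  have hft : C.ftMor r = C.id (C.ft (C.cod r)) := hs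
  have h4 := sOp_q C r hl
  rw [hft, C.q_id _ hl] at h4
  have hcod : C.cod (C.sOp r) = C.cod r := by
    rw [sOp_cod C r hl, hft, C.star_id _ hl]
  calc C.sOp r = C.comp (C.sOp r) (C.id (C.cod (C.sOp r))) := (C.comp_id _).symm
    _ = C.comp (C.sOp r) (C.id (C.cod r)) := by rw [hcod]
    _ = r := h4

lemma killq (m h_ : Mor) (hcomp : C.cod m = C.dom h_) (hl : 0 < C.l (C.cod h_)) :
    C.sOp (C.comp m h_) = C.sOp (C.comp m (C.sOp h_)) := by
  have hdomq : C.dom (C.q (C.cod h_) (C.ftMor h_)) = C.star (C.cod h_) (C.ftMor h_) :=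
    C.q_dom _ _ hl (ftMor_cod C h_)
  have hcodms : C.cod (C.comp m (C.sOp h_)) = C.star (C.cod h_) (C.ftMor h_) := by
    rw [C.cod_comp _ _ (by rw [sOp_dom C h_ hl]; exact hcomp), sOp_cod C h_ hl]
  have h5 := sOp_congr C (C.comp m (C.sOp h_)) (C.cod h_) (C.ftMor h_) hl
    (ftMor_cod C h_)
    (by rw [hcodms]; exact C.l_star _ _ hl (ftMor_cod C h_)) hcodms
  rw [h5, C.comp_assoc m (C.sOp h_) (C.q (C.cod h_) (C.ftMor h_))
      (by rw [sOp_dom C h_ hl]; exact hcomp)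
      (by rw [sOp_cod C h_ hl, hdomq]),
    sOp_q C h_ hl]

end Stmt7Proof
namespace Stmt7Proof

variable {Ob : Type u} {Mor : Type v} (C : CSys Ob Mor)

lemma pIter_cod (X : Ob) : ∀ i, C.cod (C.pIter X i) = C.ft^[i] X := by
  intro i
  induction i with
  | zero => exact C.id_cod X
  | succ i ih =>
    show C.cod (C.comp (C.pIter X i) (C.p (C.ft^[i] X))) = _
    rw [C.cod_comp _ _ (by rw [ih, C.p_dom]), C.p_cod, Function.iterate_succ_apply']

lemma pIter_dom (X : Ob) : ∀ i, C.dom (C.pIter X i) = X := by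
  intro i
  induction i with
  | zero => exact C.id_dom X
  | succ i ih =>
    show C.dom (C.comp (C.pIter X i) (C.p (C.ft^[i] X))) = _
    rw [C.dom_comp _ _ (by rw [pIter_cod, C.p_dom]), ih]

lemma pIter_one (X : Ob) : C.pIter X 1 = C.p X := by
  show C.comp (C.pIter X 0) (C.p (C.ft^[0] X)) = C.p X
  show C.comp (C.id X) (C.p X) = C.p X
  have h := C.id_comp (C.p X)
  rw [C.p_dom] at h
  exact h

lemma pIter_succ_left (X : Ob) : ∀ i, C.pIter X (i+1) = C.comp (C.p X) (C.pIter (C.ft X) i) := by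
  intro i
  induction i with
  | zero =>
    rw [pIter_one]
    show _ = C.comp (C.p X) (C.id (C.ft X))
    rw [← C.p_cod X]
    exact (C.comp_id (C.p X)).symm
  | succ i ih =>
    show C.comp (C.pIter X (i+1)) (C.p (C.ft^[i+1] X)) = _
    rw [ih, Function.iterate_succ_apply,
      C.comp_assoc _ _ _ (by rw [C.p_cod, pIter_dom]) (by rw [pIter_cod, C.p_dom])]
    rfl

lemma pIter_ftMor (X : Ob) (i : ℕ) : C.ftMor (C.pIter X i) = C.pIter X (i+1) := by
  unfold CSys.ftMor
  rw [pIter_cod]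
  rfl

lemma qIter_cod (f : Mor) : ∀ i X, i ≤ C.l X → C.cod f = C.ft^[i] X →
    C.cod (C.qIter f X i) = X := by
  intro i
  induction i with
  | zero => intro X _ hf; exact hf
  | succ i ih =>
    intro X hi hf
    have hX : 0 < C.l X := by omega
    have hft : i ≤ C.l (C.ft X) := by rw [C.l_ft X hX]; omega
    show C.cod (C.q X (C.qIter f (C.ft X) i)) = X
    exact C.q_cod _ _ hX (ih (C.ft X) hft (by rw [hf, Function.iterate_succ_apply]))

lemma qIter_dom (f : Mor) : ∀ i X, i ≤ C.l X → C.cod f = C.ft^[i] X →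
    C.dom (C.qIter f X i) = C.starIter f X i := by
  intro i
  induction i with
  | zero => intro X _ _; rfl
  | succ i ih =>
    intro X hi hf
    have hX : 0 < C.l X := by omega
    have hft : i ≤ C.l (C.ft X) := by rw [C.l_ft X hX]; omega
    have hf' : C.cod f = C.ft^[i] (C.ft X) := by rw [hf, Function.iterate_succ_apply]
    show C.dom (C.q X (C.qIter f (C.ft X) i)) = C.star X (C.qIter f (C.ft X) i)
    exact C.q_dom _ _ hX (qIter_cod C f i (C.ft X) hft hf')

lemma starIter_ft (f : Mor) (i : ℕ) (X : Ob) (hi : i + 1 ≤ C.l X)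
    (hf : C.cod f = C.ft^[i+1] X) :
    C.ft (C.starIter f X (i+1)) = C.starIter f (C.ft X) i := by
  have hX : 0 < C.l X := by omega
  have hft : i ≤ C.l (C.ft X) := by rw [C.l_ft X hX]; omega
  have hf' : C.cod f = C.ft^[i] (C.ft X) := by rw [hf, Function.iterate_succ_apply]
  show C.ft (C.star X (C.qIter f (C.ft X) i)) = _
  rw [C.ft_star _ _ hX (qIter_cod C f i (C.ft X) hft hf'), qIter_dom C f i (C.ft X) hft hf']

lemma starIter_l (f : Mor) : ∀ i X, i ≤ C.l X → C.cod f = C.ft^[i] X →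
    C.l (C.starIter f X i) = C.l (C.dom f) + i := by
  intro i
  induction i with
  | zero => intro X _ _; rfl
  | succ i ih =>
    intro X hi hf
    have hX : 0 < C.l X := by omega
    have hft : i ≤ C.l (C.ft X) := by rw [C.l_ft X hX]; omega
    have hf' : C.cod f = C.ft^[i] (C.ft X) := by rw [hf, Function.iterate_succ_apply]
    have hql : C.cod (C.qIter f (C.ft X) i) = C.ft X := qIter_cod C f i (C.ft X) hft hf'
    have hpos : 0 < C.l (C.starIter f X (i+1)) := C.l_star _ _ hX hql
    have h1 : C.l (C.ft (C.starIter f X (i+1))) = C.l (C.starIter f X (i+1)) - 1 :=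
      C.l_ft _ hpos
    rw [starIter_ft C f i X hi hf, ih (C.ft X) hft hf'] at h1
    omega

lemma ft_iter_starIter (f : Mor) : ∀ k m X, k + m ≤ C.l X → C.cod f = C.ft^[k+m] X →
    C.ft^[k] (C.starIter f X (k+m)) = C.starIter f (C.ft^[k] X) m := by
  intro k
  induction k with
  | zero =>
    intro m X _ _
    rw [Nat.zero_add]
    rfl
  | succ k ih =>
    intro m X h hf
    have hX : 0 < C.l X := by omega
    have hft : k + m ≤ C.l (C.ft X) := by rw [C.l_ft X hX]; omega
    have hf' : C.cod f = C.ft^[k+m] (C.ft X) := by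
      rw [hf, show k+1+m = (k+m)+1 by omega, Function.iterate_succ_apply]
    have h1 : C.ft (C.starIter f X (k+1+m)) = C.starIter f (C.ft X) (k+m) := by
      rw [show k+1+m = (k+m)+1 by omega] at h hf ⊢
      exact starIter_ft C f (k+m) X h hf
    rw [Function.iterate_succ_apply, h1, ih m (C.ft X) hft hf',
      ← Function.iterate_succ_apply]

lemma qIter_split (f : Mor) : ∀ a b X, C.qIter (C.qIter f (C.ft^[a] X) b) X a
    = C.qIter f X (a + b) := by
  intro a
  induction a with
  | zero =>
    intro b X
    rw [Nat.zero_add]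
    rfl
  | succ a ih =>
    intro b X
    show C.q X (C.qIter (C.qIter f (C.ft^[a+1] X) b) (C.ft X) a) = C.qIter f X (a+1+b)
    rw [show (C.ft^[a+1] X) = C.ft^[a] (C.ft X) from Function.iterate_succ_apply C.ft a X,
      ih b (C.ft X)]
    rw [show a+1+b = (a+b)+1 by omega]
    rfl

lemma qIter_id : ∀ j X, j ≤ C.l X → C.qIter (C.id (C.ft^[j] X)) X j = C.id X := by
  intro j
  induction j with
  | zero => intro X _; rfl
  | succ j ih =>
    intro X hj
    have hX : 0 < C.l X := by omega
    have hft : j ≤ C.l (C.ft X) := by rw [C.l_ft X hX]; omega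
    show C.q X (C.qIter (C.id (C.ft^[j+1] X)) (C.ft X) j) = C.id X
    rw [show (C.ft^[j+1] X) = C.ft^[j] (C.ft X) from Function.iterate_succ_apply C.ft j X,
      ih (C.ft X) hft]
    exact C.q_id X hX

lemma qIter_comp (g f : Mor) : ∀ i X, i ≤ C.l X → C.cod f = C.ft^[i] X →
    C.cod g = C.dom f →
    C.qIter (C.comp g f) X i
      = C.comp (C.qIter g (C.starIter f X i) i) (C.qIter f X i) ∧
    C.starIter (C.comp g f) X i = C.starIter g (C.starIter f X i) i := by
  intro i
  induction i with
  | zero =>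
    intro X _ hf hg
    constructor
    · rfl
    · show C.dom (C.comp g f) = C.dom g
      exact C.dom_comp g f hg
  | succ i ih =>
    intro X hi hf hg
    have hX : 0 < C.l X := by omega
    have hft : i ≤ C.l (C.ft X) := by rw [C.l_ft X hX]; omega
    have hf' : C.cod f = C.ft^[i] (C.ft X) := by rw [hf, Function.iterate_succ_apply]
    obtain ⟨ihq, ihs⟩ := ih (C.ft X) hft hf' hg
    have hqfc : C.cod (C.qIter f (C.ft X) i) = C.ft X := qIter_cod C f i (C.ft X) hft hf'
    have hqfd : C.dom (C.qIter f (C.ft X) i) = C.starIter f (C.ft X) i :=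
      qIter_dom C f i (C.ft X) hft hf'
    -- facts about qIter g over starIter f (ft X) i
    have hSl : i ≤ C.l (C.starIter f (C.ft X) i) := by
      rw [starIter_l C f i (C.ft X) hft hf']; omega
    have hSft : C.ft^[i] (C.starIter f (C.ft X) i) = C.dom f := by
      have := ft_iter_starIter C f i 0 (C.ft X) (by omega) (by rw [Nat.add_zero]; exact hf')
      rw [Nat.add_zero] at this
      rw [this]
      rfl
    have hgS : C.cod g = C.ft^[i] (C.starIter f (C.ft X) i) := by rw [hSft]; exact hg
    have hqgc : C.cod (C.qIter g (C.starIter f (C.ft X) i) i) = C.starIter f (C.ft X) i :=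
      qIter_cod C g i _ hSl hgS
    have hcomp_cond : C.cod (C.qIter g (C.starIter f (C.ft X) i) i)
        = C.dom (C.qIter f (C.ft X) i) := by rw [hqgc, hqfd]
    have hstft : C.ft (C.starIter f X (i+1)) = C.starIter f (C.ft X) i :=
      starIter_ft C f i X hi hf
    constructor
    · show C.q X (C.qIter (C.comp g f) (C.ft X) i) = _
      rw [ihq, C.q_comp X (C.qIter f (C.ft X) i) (C.qIter g (C.starIter f (C.ft X) i) i)
        hX hqfc hcomp_cond]
      congr 1
      show C.q (C.starIter f X (i+1)) (C.qIter g (C.starIter f (C.ft X) i) i)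
        = C.q (C.starIter f X (i+1)) (C.qIter g (C.ft (C.starIter f X (i+1))) i)
      rw [hstft]
    · show C.star X (C.qIter (C.comp g f) (C.ft X) i) = _
      rw [ihq, C.star_comp X (C.qIter f (C.ft X) i) (C.qIter g (C.starIter f (C.ft X) i) i)
        hX hqfc hcomp_cond]
      show C.star (C.starIter f X (i+1)) (C.qIter g (C.starIter f (C.ft X) i) i)
        = C.star (C.starIter f X (i+1)) (C.qIter g (C.ft (C.starIter f X (i+1))) i)
      rw [hstft]

end Stmt7Proof
namespace Stmt7Proof

variable {Ob : Type u} {Mor : Type v} (C : CSys Ob Mor)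
variable (B : Set Ob) (Bt : Set Mor)

lemma sectStar_one (s : Mor) (W : Ob) (r : Mor) :
    C.sectStar s W r 1 = C.sOp (C.comp s r) := rfl

lemma ft_iter_mem (hcl : C.Closed B Bt) (X : Ob) (hX : X ∈ B) (i : ℕ) :
    C.ft^[i] X ∈ B := by
  induction i with
  | zero => exact hX
  | succ i ih => rw [Function.iterate_succ_apply']; exact hcl.2.1 _ ih

lemma sOp_cod_pos (f : Mor) (h : 0 < C.l (C.cod f)) : 0 < C.l (C.cod (C.sOp f)) := by
  rw [sOp_cod C f h]
  exact C.l_star _ _ h (ftMor_cod C f)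

lemma sOp_cod_ft (f : Mor) (h : 0 < C.l (C.cod f)) :
    C.ft (C.cod (C.sOp f)) = C.dom f := by
  rw [sOp_cod C f h, C.ft_star _ _ h (ftMor_cod C f), ftMor_dom]

lemma sP (hBt : Bt ⊆ C.tOb) (hcl : C.Closed B Bt) :
    ∀ i, ∀ X ∈ B, 0 < C.l (C.ft^[i] X) → C.sOp (C.pIter X i) ∈ Bt := by
  intro i
  induction i with
  | zero =>
    intro X hX h
    simp only [Function.iterate_zero_apply] at h
    exact hcl.2.2.2.2.2 X hX h
  | succ i ih =>
    intro X hX h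
    set g := C.pIter (C.ft X) i with hg
    have hXpos : 0 < C.l X := l_pos_of_iter C h
    have hftX : C.ft X ∈ B := hcl.2.1 X hX
    have hgood : 0 < C.l (C.ft^[i] (C.ft X)) := by
      rw [← Function.iterate_succ_apply]; exact h
    have ht : C.sOp g ∈ Bt := ih (C.ft X) hftX hgood
    have hgcod : C.cod g = C.ft^[i] (C.ft X) := pIter_cod C (C.ft X) i
    have hgdom : C.dom g = C.ft X := pIter_dom C (C.ft X) i
    have hlg : 0 < C.l (C.cod g) := by rw [hgcod]; exact hgood
    have hkill : C.sOp (C.comp (C.p X) g) = C.sOp (C.comp (C.p X) (C.sOp g)) :=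
      killq C _ _ (by rw [C.p_cod, hgdom]) hlg
    have hmem := hcl.2.2.2.1 X hX (C.sOp g) ht hXpos 1 (le_refl 1)
      (sOp_cod_pos C g hlg)
      (by simp only [Function.iterate_one]; rw [sOp_cod_ft C g hlg, hgdom])
    rw [sectStar_one] at hmem
    rw [pIter_succ_left, hkill]
    exact hmem

lemma pIter_mem (hBt : Bt ⊆ C.tOb) (hcl : C.Closed B Bt) :
    ∀ n X i, X ∈ B → C.l (C.ft^[i] X) = n → MorIn C B Bt (C.pIter X i) := by
  intro n
  induction n with
  | zero =>
    intro X i hX hl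
    exact MorIn.base _ (by rw [pIter_cod]; exact C.eq_pt _ hl) (by rw [pIter_dom]; exact hX)
  | succ n ih =>
    intro X i hX hl
    refine MorIn.step _ (by rw [pIter_cod, hl]; omega) ?_ ?_ ?_
    · rw [pIter_cod]; exact ft_iter_mem C B Bt hcl X hX i
    · rw [pIter_ftMor]
      refine ih X (i+1) hX ?_
      rw [Function.iterate_succ_apply', C.l_ft _ (by omega), hl]
      omega
    · exact sP C B Bt hBt hcl i X hX (by omega)

lemma id_mem' (hBt : Bt ⊆ C.tOb) (hcl : C.Closed B Bt) (X : Ob) (hX : X ∈ B) :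
    MorIn C B Bt (C.id X) :=
  pIter_mem C B Bt hBt hcl (C.l X) X 0 hX rfl

lemma p_mem' (hBt : Bt ⊆ C.tOb) (hcl : C.Closed B Bt) (X : Ob) (hX : X ∈ B) :
    MorIn C B Bt (C.p X) := by
  rw [← pIter_one]
  exact pIter_mem C B Bt hBt hcl _ X 1 hX rfl

lemma Bt_sub_MorIn (hBt : Bt ⊆ C.tOb) (hcl : C.Closed B Bt) (r : Mor) (hr : r ∈ Bt) :
    MorIn C B Bt r := by
  obtain ⟨hl, hd, hs⟩ := hBt hr
  refine MorIn.step _ hl (hcl.2.2.1 r hr) ?_ ?_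
  · show MorIn C B Bt (C.comp r (C.p (C.cod r)))
    rw [hs]
    exact id_mem' C B Bt hBt hcl _ (hcl.2.1 _ (hcl.2.2.1 r hr))
  · rw [sOp_section C r (hBt hr)]
    exact hr

lemma dom_mem' (hcl : C.Closed B Bt) (f : Mor) (hf : MorIn C B Bt f) : C.dom f ∈ B := by
  induction hf with
  | base f hc hd => exact hd
  | step f hl hc hft hs ih =>
    rw [← ftMor_dom C f]
    exact ih

lemma cod_mem' (hcl : C.Closed B Bt) (f : Mor) (hf : MorIn C B Bt f) : C.cod f ∈ B := by
  cases hf with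
  | base f hc hd => rw [hc]; exact hcl.1
  | step f hl hc hft hs => exact hc

end Stmt7Proof
namespace Stmt7Proof

variable {Ob : Type u} {Mor : Type v} (C : CSys Ob Mor)
variable (B : Set Ob) (Bt : Set Mor)

lemma ftMor_comp_sec (Q r : Mor) (hQr : C.cod Q = C.dom r) (hr : r ∈ C.tOb) :
    C.ftMor (C.comp Q r) = Q := by
  obtain ⟨hl, hd, hs⟩ := hr
  unfold CSys.ftMor
  rw [C.cod_comp Q r hQr,
    C.comp_assoc Q r (C.p (C.cod r)) hQr (C.p_dom _).symm, hs,
    show C.ft (C.cod r) = C.cod Q by rw [hQr, hd], C.comp_id]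

lemma sOp_comp_sec_cod (Q r : Mor) (hQr : C.cod Q = C.dom r) (hr : r ∈ C.tOb) :
    C.cod (C.sOp (C.comp Q r)) = C.star (C.cod r) Q := by
  have hpos : 0 < C.l (C.cod (C.comp Q r)) := by
    rw [C.cod_comp Q r hQr]; exact hr.1
  rw [sOp_cod C _ hpos, ftMor_comp_sec C Q r hQr hr, C.cod_comp Q r hQr]

lemma qIter_split_q (g : Mor) (a : ℕ) (Z : Ob) :
    C.qIter (C.q (C.ft^[a] Z) g) Z a = C.qIter g Z (a+1) := by
  have h := qIter_split C g a 1 Z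
  have h2 : C.qIter g (C.ft^[a] Z) 1 = C.q (C.ft^[a] Z) g := rfl
  rw [h2] at h
  exact h

lemma star_split_q (g : Mor) : ∀ a Z, a + 1 ≤ C.l Z → C.cod g = C.ft^[a+1] Z →
    C.starIter (C.q (C.ft^[a] Z) g) Z a = C.starIter g Z (a+1) := by
  intro a
  induction a with
  | zero =>
    intro Z hZ hg
    have hZ0 : 0 < C.l Z := by omega
    have hg' : C.cod g = C.ft Z := by
      rw [hg]; exact Function.iterate_one C.ft ▸ rfl
    show C.dom (C.q Z g) = C.star Z g
    exact C.q_dom Z g hZ0 hg'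
  | succ a ih =>
    intro Z hZ hg
    show C.star Z (C.qIter (C.q (C.ft^[a+1] Z) g) (C.ft Z) a) = C.starIter g Z (a+2)
    rw [show C.ft^[a+1] Z = C.ft^[a] (C.ft Z) from Function.iterate_succ_apply C.ft a Z,
      qIter_split_q C g a (C.ft Z)]
    rfl

/-- Base case of the key lemma when `l (dom f) = 0`. -/
lemma Ebase0 (hBt : Bt ⊆ C.tOb) (hcl : C.Closed B Bt)
    (f : Mor) (hc : C.cod f = C.pt) (hd : C.dom f ∈ B) (hn : C.l (C.dom f) = 0) :
    ∀ r i, r ∈ Bt → 1 ≤ i → i ≤ C.l (C.cod r) → C.cod f = C.ft^[i] (C.cod r) →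
    C.sOp (C.comp (C.qIter f (C.ft (C.cod r)) (i-1)) r) ∈ Bt := by
  intro r i hr hi1 hiW hfW
  obtain ⟨j, rfl⟩ : ∃ j, i = j + 1 := ⟨i - 1, by omega⟩
  simp only [Nat.add_sub_cancel]
  obtain ⟨hWpos, hrdom, hrsec⟩ := hBt hr
  have hdompt : C.dom f = C.pt := C.eq_pt _ hn
  have hfid : f = C.id C.pt :=
    to_pt_unique C f (C.id C.pt) hc (C.id_cod _) (by rw [hdompt, C.id_dom])
  have hpt : C.ft^[j] (C.ft (C.cod r)) = C.pt := by
    rw [← Function.iterate_succ_apply, ← hfW]; exact hc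
  have hftl : j ≤ C.l (C.ft (C.cod r)) := by
    rw [C.l_ft _ (by omega)]; omega
  rw [hfid, ← hpt, qIter_id C j (C.ft (C.cod r)) hftl,
    show C.ft (C.cod r) = C.dom r from hrdom.symm, C.id_comp r,
    sOp_section C r (hBt hr)]
  exact hr

/-- Base case of the key lemma: `f` has codomain `pt`. -/
lemma Ebase (hBt : Bt ⊆ C.tOb) (hcl : C.Closed B Bt) :
    ∀ n f, C.cod f = C.pt → C.dom f ∈ B → C.l (C.dom f) ≤ n →
    ∀ r i, r ∈ Bt → 1 ≤ i → i ≤ C.l (C.cod r) → C.cod f = C.ft^[i] (C.cod r) →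
    C.sOp (C.comp (C.qIter f (C.ft (C.cod r)) (i-1)) r) ∈ Bt := by
  intro n
  induction n with
  | zero =>
    intro f hc hd hn r i hr hi1 hiW hfW
    exact Ebase0 C B Bt hBt hcl f hc hd (Nat.le_zero.mp hn) r i hr hi1 hiW hfW
  | succ n ih =>
    intro f hc hd hn r i hr hi1 hiW hfW
    rcases Nat.eq_zero_or_pos (C.l (C.dom f)) with hY0 | hYpos
    · exact Ebase0 C B Bt hBt hcl f hc hd hY0 r i hr hi1 hiW hfW
    · obtain ⟨j, rfl⟩ : ∃ j, i = j + 1 := ⟨i - 1, by omega⟩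
      simp only [Nat.add_sub_cancel]
      obtain ⟨hWpos, hrdom, hrsec⟩ := hBt hr
      obtain ⟨f', ⟨hf'd, hf'c⟩, _⟩ := C.pt_final (C.ft (C.dom f))
      have hpY : C.cod (C.p (C.dom f)) = C.dom f' := by rw [C.p_cod, hf'd]
      have hfeq : f = C.comp (C.p (C.dom f)) f' := by
        refine to_pt_unique C f _ hc ?_ ?_
        · rw [C.cod_comp _ _ hpY]; exact hf'c
        · rw [C.dom_comp _ _ hpY, C.p_dom]
      have hftl : j ≤ C.l (C.ft (C.cod r)) := by
        rw [C.l_ft _ (by omega)]; omega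
      have hpt : C.ft^[j+1] (C.cod r) = C.pt := by rw [← hfW]; exact hc
      have hf'cod : C.cod f' = C.ft^[j] (C.ft (C.cod r)) := by
        rw [hf'c, ← Function.iterate_succ_apply]; exact hpt.symm
      have hf'codW : C.cod f' = C.ft^[j+1] (C.cod r) := by rw [hf'c, hpt]
      obtain ⟨hq, hsplit⟩ := qIter_comp C (C.p (C.dom f)) f' j (C.ft (C.cod r))
        hftl hf'cod hpY
      have hQf'cod : C.cod (C.qIter f' (C.ft (C.cod r)) j) = C.ft (C.cod r) :=
        qIter_cod C f' j _ hftl hf'cod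
      have hQf'dom : C.dom (C.qIter f' (C.ft (C.cod r)) j)
          = C.starIter f' (C.ft (C.cod r)) j :=
        qIter_dom C f' j _ hftl hf'cod
      have ht : C.sOp (C.comp (C.qIter f' (C.ft (C.cod r)) j) r) ∈ Bt := by
        have := ih f' hf'c (by rw [hf'd]; exact hcl.2.1 _ hd)
          (by rw [hf'd, C.l_ft _ hYpos]; omega) r (j+1) hr (by omega) hiW hf'codW
        simpa only [Nat.add_sub_cancel] using this
      set t := C.sOp (C.comp (C.qIter f' (C.ft (C.cod r)) j) r) with htdef
      have hQr : C.cod (C.qIter f' (C.ft (C.cod r)) j) = C.dom r := by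
        rw [hQf'cod, hrdom]
      have htcod' : C.cod t = C.starIter f' (C.cod r) (j+1) :=
        sOp_comp_sec_cod C _ r hQr (hBt hr)
      have hstarl : C.l (C.starIter f' (C.cod r) (j+1)) = C.l (C.dom f') + (j+1) :=
        starIter_l C f' (j+1) (C.cod r) hiW hf'codW
      have hftcodt : C.ft (C.cod t) = C.starIter f' (C.ft (C.cod r)) j := by
        rw [htcod']
        exact starIter_ft C f' j (C.cod r) hiW hf'codW
      have hftiter : C.ft^[j+1] (C.cod t) = C.dom f' := by
        rw [htcod']
        have h0 := ft_iter_starIter C f' (j+1) 0 (C.cod r)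
          (by rw [Nat.add_zero]; exact hiW) (by rw [Nat.add_zero]; exact hf'codW)
        rw [Nat.add_zero] at h0
        rw [h0]
        rfl
      have hmem := hcl.2.2.2.1 (C.dom f) hd t ht hYpos (j+1) (by omega)
        (by rw [htcod', hstarl]; omega)
        (by rw [hftiter, hf'd])
      have hsect : C.sectStar (C.p (C.dom f)) (C.cod t) t (j+1)
          = C.sOp (C.comp (C.qIter (C.p (C.dom f)) (C.starIter f' (C.ft (C.cod r)) j) j) t) := by
        unfold CSys.sectStar
        simp only [Nat.add_sub_cancel]
        rw [hftcodt]
      rw [hsect] at hmem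
      have hAcod : C.cod (C.qIter (C.p (C.dom f)) (C.starIter f' (C.ft (C.cod r)) j) j)
          = C.starIter f' (C.ft (C.cod r)) j := by
        refine qIter_cod C _ j _ ?_ ?_
        · rw [starIter_l C f' j (C.ft (C.cod r)) hftl hf'cod]; omega
        · have h0 := ft_iter_starIter C f' j 0 (C.ft (C.cod r))
            (by rw [Nat.add_zero]; exact hftl) (by rw [Nat.add_zero]; exact hf'cod)
          rw [Nat.add_zero] at h0
          rw [h0]
          show C.cod (C.p (C.dom f)) = C.dom f'
          rw [C.p_cod]
          exact hf'd.symm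
      have hgoal : C.comp (C.qIter f (C.ft (C.cod r)) j) r
          = C.comp (C.qIter (C.p (C.dom f)) (C.starIter f' (C.ft (C.cod r)) j) j)
              (C.comp (C.qIter f' (C.ft (C.cod r)) j) r) := by
        conv_lhs => rw [hfeq]
        rw [hq, C.comp_assoc _ _ r (by rw [hAcod, hQf'dom]) hQr]
      rw [hgoal, killq C _ _ (by rw [hAcod, C.dom_comp _ _ hQr, hQf'dom])
        (by rw [C.cod_comp _ _ hQr]; exact hWpos)]
      exact hmem

end Stmt7Proof
namespace Stmt7Proof

variable {Ob : Type u} {Mor : Type v} (C : CSys Ob Mor)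
variable (B : Set Ob) (Bt : Set Mor)

/-- The key lemma: pulling back a section of `B̃` along a morphism of the subsystem
yields a section of `B̃`. -/
lemma lemE (hBt : Bt ⊆ C.tOb) (hcl : C.Closed B Bt) :
    ∀ f, MorIn C B Bt f → ∀ r i, r ∈ Bt → 1 ≤ i → i ≤ C.l (C.cod r) →
    C.cod f = C.ft^[i] (C.cod r) →
    C.sOp (C.comp (C.qIter f (C.ft (C.cod r)) (i-1)) r) ∈ Bt := by
  intro f hf
  induction hf with
  | base f hc hd =>
    intro r i hr hi1 hiW hfW
    exact Ebase C B Bt hBt hcl (C.l (C.dom f)) f hc hd (le_refl _) r i hr hi1 hiW hfW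
  | step f hl hcB hftm hs ih =>
    intro r i hr hi1 hiW hfW
    obtain ⟨j, rfl⟩ : ∃ j, i = j + 1 := ⟨i - 1, by omega⟩
    simp only [Nat.add_sub_cancel]
    obtain ⟨hWpos, hrdom, hrsec⟩ := hBt hr
    -- lengths
    have hliW : C.l (C.ft^[j+1] (C.cod r)) = C.l (C.cod r) - (j+1) :=
      l_ft_iter C (C.cod r) (j+1) hiW
    have hjW : j + 2 ≤ C.l (C.cod r) := by
      have : 0 < C.l (C.ft^[j+1] (C.cod r)) := hfW ▸ hl
      omega
    -- g = ftMor f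
    have hgcod : C.cod (C.ftMor f) = C.ft^[j+2] (C.cod r) := by
      rw [ftMor_cod, hfW]
      exact (Function.iterate_succ_apply' C.ft (j+1) (C.cod r)).symm
    have hgdom : C.dom (C.ftMor f) = C.dom f := ftMor_dom C f
    have hftl : j + 1 ≤ C.l (C.ft (C.cod r)) := by
      rw [C.l_ft _ (by omega)]; omega
    have hgcod' : C.cod (C.ftMor f) = C.ft^[j+1] (C.ft (C.cod r)) := by
      rw [hgcod]; exact Function.iterate_succ_apply C.ft (j+1) (C.cod r)
    -- the inner pullback section t'
    have ht' : C.sOp (C.comp (C.qIter (C.ftMor f) (C.ft (C.cod r)) (j+1)) r) ∈ Bt := by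
      have := ih r (j+2) hr (by omega) hjW (by rw [hgcod])
      simpa only [Nat.add_sub_cancel, show j + 2 - 1 = j + 1 by omega] using this
    set t' := C.sOp (C.comp (C.qIter (C.ftMor f) (C.ft (C.cod r)) (j+1)) r) with ht'def
    have hQgcod : C.cod (C.qIter (C.ftMor f) (C.ft (C.cod r)) (j+1)) = C.ft (C.cod r) :=
      qIter_cod C _ (j+1) _ hftl hgcod'
    have hQgdom : C.dom (C.qIter (C.ftMor f) (C.ft (C.cod r)) (j+1))
        = C.starIter (C.ftMor f) (C.ft (C.cod r)) (j+1) :=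
      qIter_dom C _ (j+1) _ hftl hgcod'
    have hQgr : C.cod (C.qIter (C.ftMor f) (C.ft (C.cod r)) (j+1)) = C.dom r := by
      rw [hQgcod, hrdom]
    have ht'cod : C.cod t' = C.starIter (C.ftMor f) (C.cod r) (j+2) :=
      sOp_comp_sec_cod C _ r hQgr (hBt hr)
    have hst'l : C.l (C.starIter (C.ftMor f) (C.cod r) (j+2)) = C.l (C.dom f) + (j+2) := by
      have := starIter_l C (C.ftMor f) (j+2) (C.cod r) hjW hgcod
      rw [hgdom] at this
      exact this
    have hft'codt : C.ft (C.cod t') = C.starIter (C.ftMor f) (C.ft (C.cod r)) (j+1) := by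
      rw [ht'cod]
      exact starIter_ft C (C.ftMor f) (j+1) (C.cod r) hjW hgcod
    -- ft^[j+1] (cod t') = star (cod f) (ftMor f) = cod (sOp f)
    have hXeq : C.ft^[j] (C.ft (C.cod r)) = C.cod f := by
      rw [← Function.iterate_succ_apply, ← hfW]
    have hftiter : C.ft^[j+1] (C.cod t') = C.star (C.cod f) (C.ftMor f) := by
      rw [ht'cod]
      have h0 := ft_iter_starIter C (C.ftMor f) (j+1) 1 (C.cod r)
        (by omega) (by rw [show j+1+1 = j+2 by omega]; exact hgcod)
      rw [show j+1+1 = j+2 by omega] at h0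
      rw [h0]
      show C.star (C.ft^[j+1] (C.cod r)) (C.qIter (C.ftMor f) (C.ft (C.ft^[j+1] (C.cod r))) 0)
        = C.star (C.cod f) (C.ftMor f)
      rw [← hfW]
      rfl
    have hsopfcod : C.cod (C.sOp f) = C.star (C.cod f) (C.ftMor f) := sOp_cod C f hl
    -- apply the S̃ closure condition
    have hmem := hcl.2.2.2.2.1 (C.sOp f) hs t' ht' (j+1) (by omega)
      (by rw [hsopfcod, hftiter])
    have hsect : C.sectStar (C.sOp f) (C.cod t') t' (j+1)
        = C.sOp (C.comp (C.qIter (C.sOp f) (C.starIter (C.ftMor f) (C.ft (C.cod r)) (j+1)) j) t') := by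
      unfold CSys.sectStar
      simp only [Nat.add_sub_cancel]
      rw [hft'codt]
    rw [hsect] at hmem
    -- now rewrite the goal into this form
    have hqXg : C.cod (C.q (C.cod f) (C.ftMor f)) = C.ft^[j] (C.ft (C.cod r)) := by
      rw [C.q_cod _ _ hl (ftMor_cod C f), hXeq]
    have hsopfdom : C.cod (C.sOp f) = C.dom (C.q (C.cod f) (C.ftMor f)) := by
      rw [hsopfcod, C.q_dom _ _ hl (ftMor_cod C f)]
    have hjlft : j ≤ C.l (C.ft (C.cod r)) := by omega
    obtain ⟨hq, hsplit⟩ := qIter_comp C (C.sOp f) (C.q (C.cod f) (C.ftMor f)) j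
      (C.ft (C.cod r)) hjlft hqXg hsopfdom
    -- identify qIter (q (cod f) (ftMor f)) (ft (cod r)) j with qIter (ftMor f) (ft (cod r)) (j+1)
    have hqsplit : C.qIter (C.q (C.cod f) (C.ftMor f)) (C.ft (C.cod r)) j
        = C.qIter (C.ftMor f) (C.ft (C.cod r)) (j+1) := by
      conv_lhs => rw [← hXeq]
      exact qIter_split_q C (C.ftMor f) j (C.ft (C.cod r))
    have hssplit : C.starIter (C.q (C.cod f) (C.ftMor f)) (C.ft (C.cod r)) j
        = C.starIter (C.ftMor f) (C.ft (C.cod r)) (j+1) := by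
      conv_lhs => rw [← hXeq]
      exact star_split_q C (C.ftMor f) j (C.ft (C.cod r)) hftl hgcod'
    rw [hqsplit, hssplit] at hq
    have hAcod : C.cod (C.qIter (C.sOp f) (C.starIter (C.ftMor f) (C.ft (C.cod r)) (j+1)) j)
        = C.starIter (C.ftMor f) (C.ft (C.cod r)) (j+1) := by
      refine qIter_cod C _ j _ ?_ ?_
      · have := starIter_l C (C.ftMor f) (j+1) (C.ft (C.cod r)) hftl hgcod'
        rw [hgdom] at this
        omega
      · have h0 := ft_iter_starIter C (C.ftMor f) j 1 (C.ft (C.cod r))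
          (by rw [show j+1 = j+1 by rfl]; exact hftl) (by exact hgcod')
        rw [h0, hsopfcod]
        show C.star (C.cod f) (C.ftMor f)
          = C.star (C.ft^[j] (C.ft (C.cod r))) (C.qIter (C.ftMor f) (C.ft (C.ft^[j] (C.ft (C.cod r)))) 0)
        rw [hXeq]
        rfl
    have hgoal : C.comp (C.qIter f (C.ft (C.cod r)) j) r
        = C.comp (C.qIter (C.sOp f) (C.starIter (C.ftMor f) (C.ft (C.cod r)) (j+1)) j)
            (C.comp (C.qIter (C.ftMor f) (C.ft (C.cod r)) (j+1)) r) := by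
      conv_lhs => rw [← sOp_q C f hl]
      rw [hq, C.comp_assoc _ _ r (by rw [hAcod, hQgdom]) hQgr]
    rw [hgoal, killq C _ _ (by rw [hAcod, C.dom_comp _ _ hQgr, hQgdom])
      (by rw [C.cod_comp _ _ hQgr]; exact hWpos)]
    exact hmem

end Stmt7Proof
namespace Stmt7Proof

variable {Ob : Type u} {Mor : Type v} (C : CSys Ob Mor)
variable (B : Set Ob) (Bt : Set Mor)

lemma lemD (hBt : Bt ⊆ C.tOb) (hcl : C.Closed B Bt) (f r : Mor) (hf : MorIn C B Bt f)
    (hr : r ∈ Bt) (hcomp : C.cod f = C.dom r) : C.sOp (C.comp f r) ∈ Bt := by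
  have h := lemE C B Bt hBt hcl f hf r 1 hr (le_refl 1) (hBt hr).1
    (by rw [Function.iterate_one]; exact hcomp.trans (hBt hr).2.1)
  exact h

lemma comp_mem' (hBt : Bt ⊆ C.tOb) (hcl : C.Closed B Bt) :
    ∀ g, MorIn C B Bt g → ∀ f, MorIn C B Bt f → C.cod f = C.dom g →
    MorIn C B Bt (C.comp f g) := by
  intro g hg
  induction hg with
  | base g hc hd =>
    intro f hf hcomp
    exact MorIn.base _ (by rw [C.cod_comp f g hcomp]; exact hc)
      (by rw [C.dom_comp f g hcomp]; exact dom_mem' C B Bt hcl f hf)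
  | step g hl hcB hftm hs ih =>
    intro f hf hcomp
    refine MorIn.step _ (by rw [C.cod_comp f g hcomp]; exact hl)
      (by rw [C.cod_comp f g hcomp]; exact hcB) ?_ ?_
    · have hfm : C.ftMor (C.comp f g) = C.comp f (C.ftMor g) := by
        unfold CSys.ftMor
        rw [C.cod_comp f g hcomp, C.comp_assoc f g _ hcomp (C.p_dom _).symm]
      rw [hfm]
      exact ih f hf (by rw [ftMor_dom]; exact hcomp)
    · rw [killq C f g hcomp hl]
      exact lemD C B Bt hBt hcl f (C.sOp g) hf hs (by rw [sOp_dom C g hl]; exact hcomp)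

lemma star_mem' (hBt : Bt ⊆ C.tOb) (hcl : C.Closed B Bt) (X : Ob) (hX : X ∈ B)
    (f : Mor) (hf : MorIn C B Bt f) (hlX : 0 < C.l X) (hcodf : C.cod f = C.ft X) :
    C.star X f ∈ B := by
  have hdX : C.delta X ∈ Bt := hcl.2.2.2.2.2 X hX hlX
  have hlid : 0 < C.l (C.cod (C.id X)) := by rw [C.id_cod]; exact hlX
  have hftMorid : C.ftMor (C.id X) = C.p X := by
    unfold CSys.ftMor
    rw [C.id_cod]
    have h := C.id_comp (C.p X)
    rw [C.p_dom] at h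
    exact h
  have hWd : C.cod (C.delta X) = C.star X (C.p X) := by
    show C.cod (C.sOp (C.id X)) = _
    rw [sOp_cod C _ hlid, hftMorid, C.id_cod]
  have hdXtOb : C.delta X ∈ C.tOb := sOp_tOb C (C.id X) hlid
  have hftW : C.ft (C.cod (C.delta X)) = X := by
    rw [hWd, C.ft_star _ _ hlX (C.p_cod X), C.p_dom]
  have hposW : 0 < C.l (C.cod (C.delta X)) := hdXtOb.1
  have hlW : C.l (C.cod (C.delta X)) = C.l X + 1 := by
    have h2 := C.l_ft _ hposW
    rw [hftW] at h2
    omega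
  have hfW2 : C.cod f = C.ft^[2] (C.cod (C.delta X)) := by
    have h2 : C.ft^[2] (C.cod (C.delta X)) = C.ft X := by
      show C.ft (C.ft (C.cod (C.delta X))) = C.ft X
      rw [hftW]
    rw [h2]
    exact hcodf
  have happly := lemE C B Bt hBt hcl f hf (C.delta X) 2 hdX (by omega)
    (by rw [hlW]; omega) hfW2
  have hq1 : C.qIter f (C.ft (C.cod (C.delta X))) (2-1) = C.q X f := by
    rw [show (2:ℕ)-1 = 1 from rfl, hftW]
    rfl
  rw [hq1] at happly
  have hdd : C.dom (C.delta X) = X := by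
    show C.dom (C.sOp (C.id X)) = X
    rw [sOp_dom C _ hlid, C.id_dom]
  have hqd : C.cod (C.q X f) = C.dom (C.delta X) := by
    rw [C.q_cod _ _ hlX hcodf, hdd]
  have hcodt : C.cod (C.sOp (C.comp (C.q X f) (C.delta X)))
      = C.star (C.cod (C.delta X)) (C.q X f) :=
    sOp_comp_sec_cod C _ _ hqd hdXtOb
  have hfinal : C.ft (C.cod (C.sOp (C.comp (C.q X f) (C.delta X)))) = C.star X f := by
    rw [hcodt, C.ft_star _ _ hposW (by rw [C.q_cod _ _ hlX hcodf, hftW]),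
      C.q_dom _ _ hlX hcodf]
  rw [← hfinal]
  exact hcl.2.1 _ (hcl.2.2.1 _ happly)

lemma q_mem' (hBt : Bt ⊆ C.tOb) (hcl : C.Closed B Bt) (X : Ob) (hX : X ∈ B)
    (f : Mor) (hf : MorIn C B Bt f) (hlX : 0 < C.l X) (hcodf : C.cod f = C.ft X) :
    MorIn C B Bt (C.q X f) := by
  refine MorIn.step _ (by rw [C.q_cod _ _ hlX hcodf]; exact hlX)
    (by rw [C.q_cod _ _ hlX hcodf]; exact hX) ?_ ?_
  · have hsq : C.ftMor (C.q X f) = C.comp (C.p (C.star X f)) f := by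
      unfold CSys.ftMor
      rw [C.q_cod _ _ hlX hcodf]
      exact (C.square_comm X f hlX hcodf).symm
    rw [hsq]
    exact comp_mem' C B Bt hBt hcl f hf (C.p (C.star X f))
      (p_mem' C B Bt hBt hcl _ (star_mem' C B Bt hBt hcl X hX f hf hlX hcodf))
      (by rw [C.p_cod, C.ft_star _ _ hlX hcodf])
  · have hdelta : C.sOp (C.id (C.star X f)) = C.sOp (C.q X f) := by
      have h5 := sOp_congr C (C.id (C.star X f)) X f hlX hcodf
        (by rw [C.id_cod]; exact C.l_star _ _ hlX hcodf) (C.id_cod _)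
      rw [h5]
      congr 1
      have h := C.id_comp (C.q X f)
      rw [C.q_dom _ _ hlX hcodf] at h
      exact h
    rw [← hdelta]
    exact hcl.2.2.2.2.2 _ (star_mem' C B Bt hBt hcl X hX f hf hlX hcodf)
      (C.l_star _ _ hlX hcodf)

lemma s_mem' (hBt : Bt ⊆ C.tOb) (hcl : C.Closed B Bt) (f : Mor) (hf : MorIn C B Bt f)
    (hl : 0 < C.l (C.cod f)) : MorIn C B Bt (C.sOp f) := by
  cases hf with
  | base f hc hd => rw [hc, C.l_pt] at hl; omega
  | step f hl' hcB hftm hs => exact Bt_sub_MorIn C B Bt hBt hcl _ hs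

lemma inter_eq (hBt : Bt ⊆ C.tOb) (hcl : C.Closed B Bt) :
    {f | MorIn C B Bt f} ∩ C.tOb = Bt := by
  ext f
  constructor
  · rintro ⟨hm, ht⟩
    cases hm with
    | base f hc hd =>
      exfalso
      have := ht.1
      rw [hc, C.l_pt] at this
      omega
    | step f hl hcB hftm hs =>
      rw [← sOp_section C f ht]
      exact hs
  · intro hf
    exact ⟨Bt_sub_MorIn C B Bt hBt hcl f hf, hBt hf⟩

lemma S_ft_iter (S : Subsystem C) : ∀ i X, X ∈ S.obs → C.ft^[i] X ∈ S.obs := by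
  intro i
  induction i with
  | zero => intro X hX; exact hX
  | succ i ih =>
    intro X hX
    rw [Function.iterate_succ_apply']
    exact S.ft_mem _ (ih X hX)

lemma S_pIter (S : Subsystem C) : ∀ i X, X ∈ S.obs → C.pIter X i ∈ S.mors := by
  intro i
  induction i with
  | zero => intro X hX; exact S.id_mem X hX
  | succ i ih =>
    intro X hX
    exact S.comp_mem _ (ih X hX) _ (S.p_mem _ (S_ft_iter C S i X hX))
      (by rw [pIter_cod, C.p_dom])

lemma mors_eq (hBt : Bt ⊆ C.tOb) (hcl : C.Closed B Bt) (S : Subsystem C)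
    (hobs : S.obs = B) (hm : S.mors ∩ C.tOb = Bt) :
    S.mors = {f | MorIn C B Bt f} := by
  ext f
  constructor
  · intro hf
    have aux : ∀ n g, g ∈ S.mors → C.l (C.cod g) = n → MorIn C B Bt g := by
      intro n
      induction n with
      | zero =>
        intro g hg hn
        exact MorIn.base g (C.eq_pt _ hn) (hobs ▸ S.dom_mem g hg)
      | succ n ih =>
        intro g hg hn
        have hl : 0 < C.l (C.cod g) := by omega
        have hftm : C.ftMor g ∈ S.mors :=
          S.comp_mem g hg (C.p (C.cod g)) (S.p_mem _ (S.cod_mem g hg)) (C.p_dom _).symm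
        refine MorIn.step g hl (hobs ▸ S.cod_mem g hg) (ih _ hftm ?_) ?_
        · rw [ftMor_cod, C.l_ft _ hl, hn]
          omega
        · rw [← hm]
          exact ⟨S.s_mem g hg hl, sOp_tOb C g hl⟩
    exact aux (C.l (C.cod f)) f hf rfl
  · intro hf
    induction hf with
    | base f hc hd =>
      have hfeq : f = C.pIter (C.dom f) (C.l (C.dom f)) := by
        refine to_pt_unique C f _ hc ?_ (by rw [pIter_dom])
        rw [pIter_cod]
        exact C.eq_pt _ (by rw [l_ft_iter C (C.dom f) _ (le_refl _)]; omega)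
      rw [hfeq]
      exact S_pIter C S _ _ (hobs ▸ hd)
    | step f hl hcB hftm hs ih =>
      have hq : C.q (C.cod f) (C.ftMor f) ∈ S.mors :=
        S.q_mem _ (hobs ▸ hcB) _ ih hl (ftMor_cod C f)
      have hsf : C.sOp f ∈ S.mors := by
        rw [← hm] at hs
        exact hs.1
      have hcm := S.comp_mem _ hsf _ hq
        (by rw [sOp_cod C f hl, C.q_dom _ _ hl (ftMor_cod C f)])
      rwa [sOp_q C f hl] at hcm

lemma subsystem_ext (S T : Subsystem C) (h1 : S.obs = T.obs) (h2 : S.mors = T.mors) :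
    S = T := by
  cases S
  cases T
  simp only at h1 h2
  subst h1
  subst h2
  rfl

end Stmt7Proof
/-- "if" part of Proposition 2009.10.15.prop2: a pair `(B, B̃)` with
`B̃ ⊆ Õb(CC)` satisfying the closure conditions (1)-(6) corresponds to a unique
C-subsystem `CC'` with `Ob(CC') = B` and `Õb(CC') = B̃`. -/
theorem stmt7 {Ob : Type u} {Mor : Type v} (C : CSys Ob Mor)
    (B : Set Ob) (Bt : Set Mor) (hBt : Bt ⊆ C.tOb) (h : C.Closed B Bt) :
    ∃! S : Subsystem C, S.obs = B ∧ S.mors ∩ C.tOb = Bt := by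
  refine ⟨⟨B, {f | MorIn C B Bt f},
    fun f hf => Stmt7Proof.dom_mem' C B Bt h f hf,
    fun f hf => Stmt7Proof.cod_mem' C B Bt h f hf,
    fun X hX => Stmt7Proof.id_mem' C B Bt hBt h X hX,
    fun f hf g hg hc => Stmt7Proof.comp_mem' C B Bt hBt h g hg f hf hc,
    h.1,
    h.2.1,
    fun X hX => Stmt7Proof.p_mem' C B Bt hBt h X hX,
    fun X hX f hf hl hc => Stmt7Proof.star_mem' C B Bt hBt h X hX f hf hl hc,
    fun X hX f hf hl hc => Stmt7Proof.q_mem' C B Bt hBt h X hX f hf hl hc,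
    fun f hf hl => Stmt7Proof.s_mem' C B Bt hBt h f hf hl⟩,
    ⟨rfl, Stmt7Proof.inter_eq C B Bt hBt h⟩, ?_⟩
  rintro S ⟨ho, hm⟩
  exact Stmt7Proof.subsystem_ext C S _ ho (Stmt7Proof.mors_eq C B Bt hBt h S ho hm)
end
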